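/- arXiv:2009.03069 — 10 statements merged into one kernel-verified Lean document; each statement's English description precedes it below -/
import Mathlib

section
/- Let T be a subring of R and let U be a filter in the Boolean algebra B. Then (U)^T = {a ∈ T | S(a) ∈ U} is an ideal of T. If moreover U is an ultrafilter in B, then (U)^T is a prime ideal of T. -/
/-!
Common setup: `Λ` is an index set, `D λ` a family of commutative rings,
`R = ∏ λ, D λ` the product ring, and
`B = ∏ λ, P(max (D λ))` the product Boolean algebra of the power sets of the
sets of maximal ideals, realized as the Pi type `∀ l, Set (MaximalSpectrum (D l))`
with its componentwise Boolean algebra structure (meet = componentwise ∩,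
join = componentwise ∪, `⊥ = (∅)_λ`, complement componentwise, order = componentwise ⊆).
-/

variable {Λ : Type*} {D : Λ → Type*}

/-- `S(a) = (V(a_λ))_λ ∈ B`, where `V(x)` is the set of maximal ideals containing `x`. -/
def SFam [∀ l, CommRing (D l)] (a : ∀ l, D l) : ∀ l, Set (MaximalSpectrum (D l)) :=
  fun l => {P | a l ∈ P.asIdeal}

/-- `z(x) = {λ | x_λ = 0}`. -/
def ZFam [∀ l, CommRing (D l)] (x : ∀ l, D l) : Set Λ := {l | x l = 0}

/-- A filter in a Boolean algebra: a nonempty subset not containing `⊥`, closed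
under meets, and upward closed. -/
def IsBFilter {B : Type*} [BooleanAlgebra B] (U : Set B) : Prop :=
  U.Nonempty ∧ ⊥ ∉ U ∧ (∀ X ∈ U, ∀ Y ∈ U, X ⊓ Y ∈ U) ∧ (∀ Y ∈ U, ∀ Z, Y ≤ Z → Z ∈ U)

/-- An ultrafilter in a Boolean algebra: a filter containing `Y` or `Yᶜ` for every `Y`. -/
def IsBUltrafilter {B : Type*} [BooleanAlgebra B] (U : Set B) : Prop :=
  IsBFilter U ∧ ∀ Y, Y ∈ U ∨ Yᶜ ∈ U

/-- Property (+): for all `r` and all nonzero `a` there is `d` lying in every maximal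
ideal containing `a` but not `r`, and in no maximal ideal containing `r`. -/
def PropertyPlus (A : Type*) [CommRing A] : Prop :=
  ∀ r a : A, a ≠ 0 → ∃ d : A,
    (∀ M : Ideal A, M.IsMaximal → a ∈ M → r ∉ M → d ∈ M) ∧
    (∀ M : Ideal A, M.IsMaximal → r ∈ M → d ∉ M)

/-- Property (++): for every `r` there is `d` with `D(r) = V(d)`, i.e. the maximal
ideals containing `d` are exactly those not containing `r`. -/
def PropertyPlusPlus (A : Type*) [CommRing A] : Prop :=
  ∀ r : A, ∃ d : A, ∀ P : MaximalSpectrum A, d ∈ P.asIdeal ↔ r ∉ P.asIdeal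

/-!
Maximal ideals are prime, so `S(ab) = S(a) ⊔ S(b)`, while `S(a) ⊓ S(b) ≤ S(a + b)`,
`S(0) = ⊤` and `S(1) = ⊥`. The filter axioms for `U` thus become the ideal axioms for
`{a | S(a) ∈ U}`, and in an ultrafilter `X ⊔ Y ∈ U` forces `X ∈ U` or `Y ∈ U`, which is
primality. Restricting to `T` is a comap along the inclusion.
-/

section SFam

variable [∀ l, CommRing (D l)]

theorem SFam_zero : SFam (0 : ∀ l, D l) = ⊤ := by
  funext l
  ext P
  simp [SFam]

theorem SFam_one : SFam (1 : ∀ l, D l) = ⊥ := by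
  funext l
  ext P
  simpa [SFam] using P.asIdeal.ne_top_iff_one.1 P.isMaximal.ne_top

theorem inf_le_SFam_add (a b : ∀ l, D l) : SFam a ⊓ SFam b ≤ SFam (a + b) :=
  fun _ P hP => P.asIdeal.add_mem hP.1 hP.2

theorem SFam_le_SFam_mul_left (a b : ∀ l, D l) : SFam b ≤ SFam (a * b) :=
  fun l P hP => P.asIdeal.mul_mem_left (a l) hP

theorem SFam_mul (a b : ∀ l, D l) : SFam (a * b) = SFam a ⊔ SFam b := by
  funext l
  ext P
  exact P.isMaximal.isPrime.mul_mem_iff_mem_or_mem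

end SFam

section BFilter

variable {B : Type*} [BooleanAlgebra B] {U : Set B}

theorem IsBFilter.inf_mem (hU : IsBFilter U) {X Y : B} (hX : X ∈ U) (hY : Y ∈ U) :
    X ⊓ Y ∈ U :=
  hU.2.2.1 X hX Y hY

theorem IsBFilter.mem_of_le (hU : IsBFilter U) {Y Z : B} (hY : Y ∈ U) (h : Y ≤ Z) : Z ∈ U :=
  hU.2.2.2 Y hY Z h

theorem IsBFilter.top_mem (hU : IsBFilter U) : ⊤ ∈ U :=
  hU.1.elim fun _ hX => hU.mem_of_le hX le_top

theorem IsBUltrafilter.mem_or_mem_of_sup_mem (hU : IsBUltrafilter U) {X Y : B}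
    (h : X ⊔ Y ∈ U) : X ∈ U ∨ Y ∈ U := by
  refine or_iff_not_imp_left.2 fun hX => hU.1.mem_of_le
    (hU.1.inf_mem ((hU.2 X).resolve_left hX) h) ?_
  rw [inf_sup_left, compl_inf_self, bot_sup_eq]
  exact inf_le_right

end BFilter

section BFilterIdeal

variable [∀ l, CommRing (D l)] (U : Set (∀ l, Set (MaximalSpectrum (D l))))

def idealOfBFilter (hU : IsBFilter U) : Ideal (∀ l, D l) where
  carrier := {a | SFam a ∈ U}
  zero_mem' := by
    show SFam 0 ∈ U
    rw [SFam_zero]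
    exact hU.top_mem
  add_mem' {a b} ha hb := hU.mem_of_le (hU.inf_mem ha hb) (inf_le_SFam_add a b)
  smul_mem' c a ha := hU.mem_of_le ha (SFam_le_SFam_mul_left c a)

variable {U}

theorem mem_idealOfBFilter (hU : IsBFilter U) {a : ∀ l, D l} :
    a ∈ idealOfBFilter U hU ↔ SFam a ∈ U :=
  Iff.rfl

theorem isPrime_idealOfBFilter (hU : IsBUltrafilter U) : (idealOfBFilter U hU.1).IsPrime where
  ne_top' h := hU.1.2.1 <|
    SFam_one (D := D) ▸ (mem_idealOfBFilter hU.1).1 ((Ideal.eq_top_iff_one _).1 h)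
  mem_or_mem' {a b} hab := hU.mem_or_mem_of_sup_mem (SFam_mul a b ▸ hab)

end BFilterIdeal

theorem stmt_0_general [∀ l, CommRing (D l)]
    (T : Subring (∀ l, D l)) (U : Set (∀ l, Set (MaximalSpectrum (D l))))
    (hU : IsBFilter U) :
    ∃ I : Ideal T, (∀ a : T, a ∈ I ↔ SFam (a : ∀ l, D l) ∈ U) ∧
      (IsBUltrafilter U → I.IsPrime) := by
  refine ⟨(idealOfBFilter U hU).comap T.subtype, fun _ => Iff.rfl, fun hUlt => ?_⟩
  have := isPrime_idealOfBFilter hUlt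
  exact Ideal.comap_isPrime _ _

/-- For a subring `T` of `R` and a filter `U` in `B`, the set
`(U)^T = {a ∈ T | S(a) ∈ U}` is an ideal of `T`; if moreover `U` is an ultrafilter
in `B`, it is a prime ideal of `T`. -/
theorem stmt_0 [∀ l, CommRing (D l)] [∀ l, Nontrivial (D l)]
    (T : Subring (∀ l, D l)) (U : Set (∀ l, Set (MaximalSpectrum (D l))))
    (hU : IsBFilter U) :
    ∃ I : Ideal T, (∀ a : T, a ∈ I ↔ SFam (a : ∀ l, D l) ∈ U) ∧
      (IsBUltrafilter U → I.IsPrime) :=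
  stmt_0_general T U hU
end

section
/- Every maximal ideal of R = ∏_{λ∈Λ} D_λ is of the form (U) = {a ∈ R | S(a) ∈ U} for some ultrafilter U in the Boolean algebra B. -/
/-!
Common setup: `Λ` is an index set, `D λ` a family of commutative rings,
`R = ∏ λ, D λ` the product ring, and
`B = ∏ λ, P(max (D λ))` the product Boolean algebra of the power sets of the
sets of maximal ideals, realized as the Pi type `∀ l, Set (MaximalSpectrum (D l))`
with its componentwise Boolean algebra structure (meet = componentwise ∩,
join = componentwise ∪, `⊥ = (∅)_λ`, complement componentwise, order = componentwise ⊆).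
-/

variable {Λ : Type*} {D : Λ → Type*}

lemma key_lemma [∀ l, CommRing (D l)] (M : Ideal (∀ l, D l)) (hM : M.IsMaximal)
    {ι : Type*} [Fintype ι] (a : ι → ∀ l, D l) (ha : ∀ i, a i ∈ M)
    (b : ∀ l, D l) (hb : b ∉ M) :
    ∃ p : Σ l, MaximalSpectrum (D l),
      (∀ i, a i p.1 ∈ p.2.asIdeal) ∧ b p.1 ∉ p.2.asIdeal := by
  by_contra h
  push_neg at h
  obtain ⟨r, m, hm, hrm⟩ := hM.exists_inv hb
  have hjac : ∀ l, b l ∈ (Ideal.span (Set.range fun i => a i l)).jacobson := by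
    intro l
    rw [Ideal.jacobson]
    refine Ideal.mem_sInf.2 ?_
    rintro J ⟨hJle, hJmax⟩
    exact h ⟨l, ⟨J, hJmax⟩⟩ fun i => hJle (Ideal.subset_span ⟨i, rfl⟩)
  have hz : ∀ l, ∃ z : D l, 1 - z * m l ∈ Ideal.span (Set.range fun i => a i l) := by
    intro l
    obtain ⟨z, hzmem⟩ := Ideal.mem_jacobson_iff.1 (hjac l) (-(r l))
    refine ⟨z, ?_⟩
    have hml : m l = 1 - r l * b l := by
      have := congrFun hrm l
      simp only [Pi.add_apply, Pi.mul_apply, Pi.one_apply] at this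
      linear_combination this
    have : 1 - z * m l = -(z * -(r l) * b l + z - 1) := by rw [hml]; ring
    rw [this]
    exact (Ideal.span (Set.range fun i => a i l)).neg_mem hzmem
  choose z hzspec using hz
  have hc : ∀ l, ∃ c : ι → D l, ∑ i, c i * a i l = 1 - z l * m l := by
    intro l
    exact Ideal.mem_span_range_iff_exists_fun.1 (hzspec l)
  choose c hcspec using hc
  have hone : (1 : ∀ l, D l) = z * m + ∑ i, (fun l => c l i) * a i := by
    funext l
    have := hcspec l
    simp only [Pi.add_apply, Pi.mul_apply, Pi.one_apply, Finset.sum_apply]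
    linear_combination -this
  have : (1 : ∀ l, D l) ∈ M := by
    rw [hone]
    exact M.add_mem (M.mul_mem_left z hm)
      (Ideal.sum_mem M fun i _ => M.mul_mem_left _ (ha i))
  exact hM.ne_top ((Ideal.eq_top_iff_one M).2 this)


/-- Every maximal ideal of `R = ∏ l, D l` is of the form `(U) = {a | S a ∈ U}` for
some ultrafilter `U` in `B`. -/
theorem stmt_2 [∀ l, CommRing (D l)] [∀ l, Nontrivial (D l)]
    (M : Ideal (∀ l, D l)) (hM : M.IsMaximal) :
    ∃ U : Set (∀ l, Set (MaximalSpectrum (D l))), IsBUltrafilter U ∧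
      ∀ a : ∀ l, D l, a ∈ M ↔ SFam a ∈ U := by
  classical
  set X := Σ l, MaximalSpectrum (D l) with hX
  let A : (∀ l, D l) → Set X := fun a => {p | a p.1 ∈ p.2.asIdeal}
  let G : Set (Set X) := {s | ∃ a ∈ M, s = A a} ∪ {s | ∃ b ∉ M, s = (A b)ᶜ}
  -- finite intersection property
  have fip : ∀ T : Finset (Set X), (↑T : Set (Set X)) ⊆ G → (⋂₀ (↑T : Set (Set X))).Nonempty := by
    intro T hT
    set T₁ : Finset (Set X) := T.filter (fun s => ∃ a ∈ M, s = A a) with hT₁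
    set T₂ : Finset (Set X) := T \ T₁ with hT₂
    have h1 : ∀ s ∈ T₁, ∃ a, a ∈ M ∧ s = A a := by
      intro s hs
      obtain ⟨a, ha, rfl⟩ := (Finset.mem_filter.1 hs).2
      exact ⟨a, ha, rfl⟩
    have h2 : ∀ s ∈ T₂, ∃ b, b ∉ M ∧ s = (A b)ᶜ := by
      intro s hs
      obtain ⟨hsT, hs1⟩ := Finset.mem_sdiff.1 hs
      rcases hT hsT with h | h
      · exact absurd (Finset.mem_filter.2 ⟨hsT, h⟩) hs1
      · obtain ⟨b, hb, rfl⟩ := h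
        exact ⟨b, hb, rfl⟩
    let af : {s // s ∈ T₁} → (∀ l, D l) := fun s => (h1 s.1 s.2).choose
    have hafM : ∀ s : {s // s ∈ T₁}, af s ∈ M := fun s => (h1 s.1 s.2).choose_spec.1
    have hafs : ∀ s : {s // s ∈ T₁}, (s : Set X) = A (af s) := fun s => (h1 s.1 s.2).choose_spec.2
    let bf : {s // s ∈ T₂} → (∀ l, D l) := fun s => (h2 s.1 s.2).choose
    have hbfM : ∀ s : {s // s ∈ T₂}, bf s ∉ M := fun s => (h2 s.1 s.2).choose_spec.1
    have hbfs : ∀ s : {s // s ∈ T₂}, (s : Set X) = (A (bf s))ᶜ := fun s => (h2 s.1 s.2).choose_spec.2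
    let b : ∀ l, D l := ∏ s ∈ T₂.attach, bf s
    have hb : b ∉ M := by
      intro hbM
      have := hM.isPrime
      rcases (Ideal.IsPrime.prod_mem_iff (hp := this)).1 hbM with ⟨s, _, hs⟩
      exact hbfM s hs
    obtain ⟨p, hpa, hpb⟩ := key_lemma M hM af hafM b hb
    refine ⟨p, ?_⟩
    intro s hs
    rcases Finset.mem_coe.1 hs |> fun hsT => (em (s ∈ T₁)) with h | h
    · have heq : s = A (af ⟨s, h⟩) := hafs ⟨s, h⟩
      rw [heq]
      exact hpa ⟨s, h⟩
    · have hsT₂ : s ∈ T₂ := Finset.mem_sdiff.2 ⟨Finset.mem_coe.1 hs, h⟩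
      have heq : s = (A (bf ⟨s, hsT₂⟩))ᶜ := hbfs ⟨s, hsT₂⟩
      rw [heq]
      intro hmem
      apply hpb
      have hdvd : bf ⟨s, hsT₂⟩ p.1 ∣ b p.1 := by
        have : b p.1 = ∏ t ∈ T₂.attach, bf t p.1 := by
          simp only [b, Finset.prod_apply]
        rw [this]
        exact Finset.dvd_prod_of_mem _ (Finset.mem_attach _ _)
      obtain ⟨c, hc⟩ := hdvd
      rw [hc]
      exact p.2.asIdeal.mul_mem_right c hmem
  obtain ⟨u, hu⟩ := Ultrafilter.exists_ultrafilter_of_finite_inter_nonempty G fip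
  let Tr : (∀ l, Set (MaximalSpectrum (D l))) → Set X := fun Y => {p | p.2 ∈ Y p.1}
  refine ⟨{Y | Tr Y ∈ u}, ⟨⟨⟨⊤, ?_⟩, ?_, ?_, ?_⟩, ?_⟩, ?_⟩
  · show Tr ⊤ ∈ u
    have : Tr ⊤ = Set.univ := by
      ext p; simp [Tr, Set.top_eq_univ]
    rw [this]; exact Filter.univ_mem
  · show Tr ⊥ ∉ u
    have : Tr ⊥ = ∅ := by
      ext p; simp [Tr, Set.bot_eq_empty]
    rw [this]; exact u.empty_notMem
  · intro Y hY Z hZ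
    show Tr (Y ⊓ Z) ∈ u
    have : Tr (Y ⊓ Z) = Tr Y ∩ Tr Z := by
      ext p; simp [Tr, Pi.inf_apply, Set.inf_eq_inter]
    rw [this]; exact Filter.inter_mem hY hZ
  · intro Y hY Z hYZ
    show Tr Z ∈ u
    refine Filter.mem_of_superset hY ?_
    intro p hp
    exact hYZ p.1 hp
  · intro Y
    rcases em (Tr Y ∈ u) with h | h
    · exact Or.inl h
    · right
      show Tr Yᶜ ∈ u
      have : Tr Yᶜ = (Tr Y)ᶜ := by
        ext p; simp [Tr, Pi.compl_apply]
      rw [this]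
      exact Ultrafilter.compl_mem_iff_notMem.2 h
  · intro a
    constructor
    · intro haM
      show Tr (SFam a) ∈ u
      have : Tr (SFam a) = A a := rfl
      rw [this]
      exact hu (Or.inl ⟨a, haM, rfl⟩)
    · intro hS
      by_contra haM
      have h1 : (A a)ᶜ ∈ u := hu (Or.inr ⟨a, haM, rfl⟩)
      have h2 : Tr (SFam a) = A a := rfl
      rw [Set.mem_setOf_eq, h2] at hS
      exact Ultrafilter.compl_mem_iff_notMem.1 h1 hS
end

section
/- Every integral domain of Krull dimension at most one (i.e. an integral domain in which every nonzero prime ideal is maximal) satisfies property (+). -/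
/-!
Common setup: `Λ` is an index set, `D λ` a family of commutative rings,
`R = ∏ λ, D λ` the product ring, and
`B = ∏ λ, P(max (D λ))` the product Boolean algebra of the power sets of the
sets of maximal ideals, realized as the Pi type `∀ l, Set (MaximalSpectrum (D l))`
with its componentwise Boolean algebra structure (meet = componentwise ∩,
join = componentwise ∪, `⊥ = (∅)_λ`, complement componentwise, order = componentwise ⊆).
-/

variable {Λ : Type*} {D : Λ → Type*}

/-!
Since every nonzero prime is maximal, `A ⧸ (a)` is zero-dimensional, hence π-regular: there
are `n` and `y` with `r ^ n * (1 - r * y) ∈ (a)`. Then `d = 1 - r * y` works: a maximal ideal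
containing `a` but not `r` contains `d` by primality, and one containing `r` cannot contain `d`.
-/

/- The elements `r ^ n * (1 - r * y)` form a multiplicative set. A prime containing `I` and
avoiding it would be maximal and miss `r`, so `r` would be invertible modulo it: some
`1 - r * y` would lie in it. -/
theorem Ideal.exists_pow_mul_one_sub_mul_mem {R : Type*} [CommRing R] {I : Ideal R}
    (hI : ∀ P : Ideal R, P.IsPrime → I ≤ P → P.IsMaximal) (r : R) :
    ∃ n y, r ^ n * (1 - r * y) ∈ I := by
  let S : Submonoid R :=
    { carrier := {x | ∃ n y, x = r ^ n * (1 - r * y)}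
      mul_mem' := by
        rintro _ _ ⟨n, y, rfl⟩ ⟨m, z, rfl⟩
        exact ⟨n + m, y + z - r * y * z, by ring⟩
      one_mem' := ⟨0, 0, by ring⟩ }
  by_contra h
  have hdisj : Disjoint (I : Set R) S := Set.disjoint_left.mpr fun x hx ⟨n, y, hxS⟩ =>
    h ⟨n, y, hxS ▸ hx⟩
  obtain ⟨P, hP, hIP, hPS⟩ := Ideal.exists_le_prime_disjoint I S hdisj
  have hrP : r ∉ P := fun hr => Set.disjoint_left.mp hPS hr ⟨1, 0, by ring⟩
  obtain ⟨y, i, hiP, hy⟩ := (hI P hP hIP).exists_inv hrP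
  have hyP : 1 - r * y ∈ P := by rwa [show 1 - r * y = i by linear_combination -hy]
  exact Set.disjoint_left.mp hPS hyP ⟨0, y, by ring⟩

theorem Ideal.isMaximal_of_span_singleton_le {A : Type*} [CommRing A]
    (hdim : ∀ P : Ideal A, P.IsPrime → P ≠ ⊥ → P.IsMaximal) {a : A} (ha : a ≠ 0)
    (P : Ideal A) (hP : P.IsPrime) (haP : Ideal.span {a} ≤ P) : P.IsMaximal :=
  hdim P hP fun hP0 => ha <| by simpa [hP0] using haP

theorem propertyPlus_of_exists_pow_mul_one_sub_mul_mem {A : Type*} [CommRing A]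
    (h : ∀ r a : A, a ≠ 0 → ∃ n y, r ^ n * (1 - r * y) ∈ Ideal.span {a}) :
    PropertyPlus A := by
  intro r a ha
  obtain ⟨n, y, hmem⟩ := h r a ha
  refine ⟨1 - r * y, fun M hM haM hrM => ?_, fun M hM hrM hyM => ?_⟩
  · have hmemM : r ^ n * (1 - r * y) ∈ M := (Ideal.span_singleton_le_iff_mem M).mpr haM hmem
    exact (hM.isPrime.mem_or_mem hmemM).resolve_left fun hrn =>
      hrM (hM.isPrime.mem_of_pow_mem n hrn)
  · exact hM.ne_top <| (Ideal.eq_top_iff_one M).mpr <| by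
      simpa using M.add_mem hyM (M.mul_mem_right y hrM)

theorem stmt_3_general (A : Type*) [CommRing A]
    (hdim : ∀ P : Ideal A, P.IsPrime → P ≠ ⊥ → P.IsMaximal) :
    PropertyPlus A :=
  propertyPlus_of_exists_pow_mul_one_sub_mul_mem fun r _ ha =>
    Ideal.exists_pow_mul_one_sub_mul_mem (Ideal.isMaximal_of_span_singleton_le hdim ha) r

/-- Every integral domain of Krull dimension at most one (every nonzero prime ideal is
maximal) satisfies property (+). -/
theorem stmt_3 (A : Type*) [CommRing A] [IsDomain A]
    (hdim : ∀ P : Ideal A, P.IsPrime → P ≠ ⊥ → P.IsMaximal) :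
    PropertyPlus A :=
  stmt_3_general A hdim
end

section
/- Let (D_λ)_{λ∈Λ} be a family of commutative rings each satisfying property (+), and let U be an ultrafilter in B containing an element of the form (V(a_λ))_{λ∈Λ} where a_λ ∈ D_λ \ {0} for all λ ∈ Λ. Then (U) = {a ∈ R | S(a) ∈ U} is a maximal ideal of R = ∏_{λ∈Λ} D_λ. -/
/-!
Common setup: `Λ` is an index set, `D λ` a family of commutative rings,
`R = ∏ λ, D λ` the product ring, and
`B = ∏ λ, P(max (D λ))` the product Boolean algebra of the power sets of the
sets of maximal ideals, realized as the Pi type `∀ l, Set (MaximalSpectrum (D l))`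
with its componentwise Boolean algebra structure (meet = componentwise ∩,
join = componentwise ∪, `⊥ = (∅)_λ`, complement componentwise, order = componentwise ⊆).
-/

variable {Λ : Type*} {D : Λ → Type*}

/-- If every `D l` satisfies property (+) and `U` is an ultrafilter in `B` containing
an element of the form `S a` with all components of `a` nonzero, then
`(U) = {r | S r ∈ U}` is a maximal ideal of `R`. -/
theorem stmt_4 [∀ l, CommRing (D l)] [∀ l, Nontrivial (D l)]
    (hplus : ∀ l, PropertyPlus (D l))
    (U : Set (∀ l, Set (MaximalSpectrum (D l)))) (hU : IsBUltrafilter U)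
    (ha : ∃ a : ∀ l, D l, (∀ l, a l ≠ 0) ∧ SFam a ∈ U) :
    ∃ I : Ideal (∀ l, D l), (∀ r, r ∈ I ↔ SFam r ∈ U) ∧ I.IsMaximal := by
  obtain ⟨⟨⟨Y0, hY0⟩, hbot, hmeet, hup⟩, hult⟩ := hU
  obtain ⟨a, hane, haU⟩ := ha
  have htop : (⊤ : ∀ l, Set (MaximalSpectrum (D l))) ∈ U := hup Y0 hY0 ⊤ le_top
  refine ⟨{ carrier := {r | SFam r ∈ U}
            zero_mem' := by
              have h0 : SFam (0 : ∀ l, D l) = ⊤ := by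
                funext l; ext P; simp [SFam]
              show SFam (0 : ∀ l, D l) ∈ U
              rw [h0]; exact htop
            add_mem' := by
              intro x y hx hy
              refine hup _ (hmeet _ hx _ hy) _ ?_
              intro l P hP
              exact P.asIdeal.add_mem hP.1 hP.2
            smul_mem' := by
              intro c x hx
              refine hup _ hx _ ?_
              intro l P hP
              exact Ideal.mul_mem_left _ _ hP }, fun r => Iff.rfl, ?_⟩
  rw [Ideal.isMaximal_iff]
  constructor
  · intro h1
    have h1' : SFam (1 : ∀ l, D l) = ⊥ := by
      funext l; ext P
      simp only [SFam, Set.mem_setOf_eq]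
      constructor
      · intro h; exact absurd ((Ideal.eq_top_iff_one _).mpr h) P.2.ne_top
      · intro h; exact h.elim
    exact hbot (h1' ▸ h1)
  · intro J x hIJ hxI hxJ
    have hxc : (SFam x)ᶜ ∈ U := (hult (SFam x)).resolve_left hxI
    set d : ∀ l, D l := fun l => (hplus l (x l) (a l) (hane l)).choose with hd
    have hspec := fun l => (hplus l (x l) (a l) (hane l)).choose_spec
    have hdU : SFam d ∈ U := by
      refine hup _ (hmeet _ haU _ hxc) _ ?_
      intro l P hP
      exact (hspec l).1 P.asIdeal P.2 hP.1 hP.2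
    have hdI : d ∈ ({r | SFam r ∈ U} : Set _) := hdU
    have hl : ∀ l, ∃ u v : D l, u * x l + v * d l = 1 := by
      intro l
      by_contra h
      push_neg at h
      have hne : Ideal.span {x l, d l} ≠ ⊤ := by
        intro heq
        have h1 : (1 : D l) ∈ Ideal.span {x l, d l} := heq ▸ Submodule.mem_top
        rw [Ideal.mem_span_pair] at h1
        obtain ⟨u, v, huv⟩ := h1
        exact h u v huv
      obtain ⟨M, hM, hle⟩ := Ideal.exists_le_maximal _ hne
      have hx : x l ∈ M := hle (Ideal.subset_span (by simp))
      have hdm : d l ∈ M := hle (Ideal.subset_span (by simp))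
      exact (hspec l).2 M hM hx hdm
    choose u v huv using hl
    have h1 : (1 : ∀ l, D l) = u * x + v * d := by
      funext l; exact (huv l).symm
    rw [h1]
    exact add_mem (J.mul_mem_left u hxJ) (J.mul_mem_left v (hIJ hdI))
end

section
/- Let T be a subring of R = ∏_{λ∈Λ} D_λ such that there exists c ∈ T where c_λ is a nonzero nonunit of D_λ for every λ ∈ Λ, and let F be an ultrafilter on Λ. Then (0)_F^T = {x ∈ T | z(x) ∈ F} is an ideal of T that is not a maximal ideal of T. -/
/-!
Common setup: `Λ` is an index set, `D λ` a family of commutative rings,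
`R = ∏ λ, D λ` the product ring, and
`B = ∏ λ, P(max (D λ))` the product Boolean algebra of the power sets of the
sets of maximal ideals, realized as the Pi type `∀ l, Set (MaximalSpectrum (D l))`
with its componentwise Boolean algebra structure (meet = componentwise ∩,
join = componentwise ∪, `⊥ = (∅)_λ`, complement componentwise, order = componentwise ⊆).
-/

variable {Λ : Type*} {D : Λ → Type*}

namespace ZFam

variable [∀ l, CommRing (D l)]

theorem zero : ZFam (0 : ∀ l, D l) = Set.univ := by
  ext l
  simp [ZFam]

theorem inter_subset_add (x y : ∀ l, D l) : ZFam x ∩ ZFam y ⊆ ZFam (x + y) := by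
  rintro l ⟨hx, hy⟩
  simp_all [ZFam]

theorem subset_mul_left (r x : ∀ l, D l) : ZFam x ⊆ ZFam (r * x) := by
  intro l hx
  simp_all [ZFam]

theorem eq_empty_of_forall_ne_zero {x : ∀ l, D l} (hx : ∀ l, x l ≠ 0) : ZFam x = ∅ :=
  Set.eq_empty_of_forall_notMem hx

end ZFam

section ZeroIdeal

variable [∀ l, CommRing (D l)]

/-- The ideal `(0)_F` of the product ring; `(0)_F^T` is its contraction to a subring `T`. -/
def zeroIdeal (F : Filter Λ) : Ideal (∀ l, D l) where
  carrier := {x | ZFam x ∈ F}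
  add_mem' {x y} hx hy := F.mem_of_superset (F.inter_mem hx hy) (ZFam.inter_subset_add x y)
  zero_mem' := by simp only [Set.mem_ofPred_eq, ZFam.zero, Filter.univ_mem]
  smul_mem' r x hx := F.mem_of_superset hx (ZFam.subset_mul_left r x)

theorem mem_zeroIdeal {F : Filter Λ} {x : ∀ l, D l} : x ∈ zeroIdeal F ↔ ZFam x ∈ F :=
  Iff.rfl

theorem isUnit_apply_of_mul_add_eq_one {y c i : ∀ l, D l} (h : y * c + i = 1) {l : Λ}
    (hi : i l = 0) : IsUnit (c l) :=
  IsUnit.of_mul_eq_one_right (y l) (by simpa [hi] using congrFun h l)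

/-- A maximal ideal avoiding `c` would give `y * c + i = 1` with `i` vanishing somewhere,
making `c` a unit at that coordinate. -/
theorem not_isMaximal_comap_zeroIdeal (F : Filter Λ) [F.NeBot] (T : Subring (∀ l, D l))
    {c : ∀ l, D l} (hcT : c ∈ T) (hc0 : ∀ l, c l ≠ 0) (hcu : ∀ l, ¬IsUnit (c l)) :
    ¬((zeroIdeal F).comap T.subtype).IsMaximal := by
  intro hmax
  have hc_notMem : (⟨c, hcT⟩ : T) ∉ (zeroIdeal F).comap T.subtype := by
    rw [Ideal.mem_comap, mem_zeroIdeal, Subring.coe_subtype, ZFam.eq_empty_of_forall_ne_zero hc0]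
    exact Filter.empty_notMem F
  obtain ⟨y, i, hi, hyi⟩ := hmax.exists_inv hc_notMem
  obtain ⟨l, hl⟩ := Filter.nonempty_of_mem (mem_zeroIdeal.mp hi)
  exact hcu l (isUnit_apply_of_mul_add_eq_one (congrArg Subtype.val hyi) hl)

end ZeroIdeal

theorem stmt_5_general [∀ l, CommRing (D l)]
    (T : Subring (∀ l, D l)) (c : ∀ l, D l) (hcT : c ∈ T)
    (hc : ∀ l, c l ≠ 0 ∧ ¬IsUnit (c l)) (F : Ultrafilter Λ) :
    ∃ I : Ideal T, (∀ x : T, x ∈ I ↔ ZFam (x : ∀ l, D l) ∈ F) ∧ ¬I.IsMaximal :=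
  ⟨(zeroIdeal (F : Filter Λ)).comap T.subtype, fun _ => Iff.rfl,
    not_isMaximal_comap_zeroIdeal F T hcT (fun l => (hc l).1) (fun l => (hc l).2)⟩

/-- If `T ⊆ R` is a subring containing an element `c` all of whose components are
nonzero nonunits, and `F` is an ultrafilter on `Λ`, then the set of `x ∈ T` with
`z x ∈ F` is a non-maximal ideal of `T`. -/
theorem stmt_5 [∀ l, CommRing (D l)] [∀ l, Nontrivial (D l)]
    (T : Subring (∀ l, D l)) (c : ∀ l, D l) (hcT : c ∈ T)
    (hc : ∀ l, c l ≠ 0 ∧ ¬IsUnit (c l)) (F : Ultrafilter Λ) :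
    ∃ I : Ideal T, (∀ x : T, x ∈ I ↔ ZFam (x : ∀ l, D l) ∈ F) ∧ ¬I.IsMaximal :=
  stmt_5_general T c hcT hc F
end

section
/- Let (D_λ)_{λ∈Λ} be a family of integral domains, let T be a subring of R = ∏_{λ∈Λ} D_λ with the property that there exists c ∈ T such that c_λ is a nonzero nonunit of D_λ for every λ ∈ Λ, and let U be an ultrafilter in B such that (U)^T is a maximal ideal of T. Then U contains an element of the form (V(a_λ))_{λ∈Λ} where a_λ ∈ D_λ \ {0} for all λ ∈ Λ. -/
/-!
Common setup: `Λ` is an index set, `D λ` a family of commutative rings,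
`R = ∏ λ, D λ` the product ring, and
`B = ∏ λ, P(max (D λ))` the product Boolean algebra of the power sets of the
sets of maximal ideals, realized as the Pi type `∀ l, Set (MaximalSpectrum (D l))`
with its componentwise Boolean algebra structure (meet = componentwise ∩,
join = componentwise ∪, `⊥ = (∅)_λ`, complement componentwise, order = componentwise ⊆).
-/

variable {Λ : Type*} {D : Λ → Type*}

theorem ne_zero_of_mul_add_eq_one {A : Type*} [CommRing A] {y c i : A} (hc : ¬IsUnit c)
    (h : y * c + i = 1) : i ≠ 0 := by
  rintro rfl
  exact hc (IsUnit.of_mul_eq_one_right y (by simpa using h))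

/-- If `c ∉ I`, maximality writes `1 = y c + i` with `i ∈ I`, and `i` cannot vanish anywhere
because `c` is a nonunit in every component. -/
theorem Subring.exists_mem_forall_ne_zero_of_isMaximal [∀ l, CommRing (D l)]
    {T : Subring (∀ l, D l)} {I : Ideal T} (hI : I.IsMaximal) {c : T}
    (hc : ∀ l, (c : ∀ l, D l) l ≠ 0 ∧ ¬IsUnit ((c : ∀ l, D l) l)) :
    ∃ a ∈ I, ∀ l, (a : ∀ l, D l) l ≠ 0 := by
  by_cases hcI : c ∈ I
  · exact ⟨c, hcI, fun l => (hc l).1⟩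
  obtain ⟨y, i, hiI, hyi⟩ := hI.exists_inv hcI
  refine ⟨i, hiI, fun l => ne_zero_of_mul_add_eq_one (y := (y : ∀ l, D l) l) (hc l).2 ?_⟩
  simpa using congrArg (fun z : T => (z : ∀ l, D l) l) hyi

theorem stmt_6_general [∀ l, CommRing (D l)]
    (T : Subring (∀ l, D l)) (c : ∀ l, D l) (hcT : c ∈ T)
    (hc : ∀ l, c l ≠ 0 ∧ ¬IsUnit (c l))
    (U : Set (∀ l, Set (MaximalSpectrum (D l))))
    (I : Ideal T) (hI : ∀ a : T, a ∈ I ↔ SFam (a : ∀ l, D l) ∈ U)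
    (hImax : I.IsMaximal) :
    ∃ a : ∀ l, D l, (∀ l, a l ≠ 0) ∧ SFam a ∈ U := by
  obtain ⟨a, haI, ha⟩ :=
    Subring.exists_mem_forall_ne_zero_of_isMaximal hImax (c := ⟨c, hcT⟩) hc
  exact ⟨a, ha, (hI a).mp haI⟩

/-- If the `D l` are integral domains, `T ⊆ R` is a subring containing an element `c`
all of whose components are nonzero nonunits, and `U` is an ultrafilter in `B` such
that `(U)^T` is a maximal ideal of `T`, then `U` contains an element of the form
`S a` with all components of `a` nonzero. -/
theorem stmt_6 [∀ l, CommRing (D l)] [∀ l, IsDomain (D l)]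
    (T : Subring (∀ l, D l)) (c : ∀ l, D l) (hcT : c ∈ T)
    (hc : ∀ l, c l ≠ 0 ∧ ¬IsUnit (c l))
    (U : Set (∀ l, Set (MaximalSpectrum (D l)))) (hU : IsBUltrafilter U)
    (I : Ideal T) (hI : ∀ a : T, a ∈ I ↔ SFam (a : ∀ l, D l) ∈ U)
    (hImax : I.IsMaximal) :
    ∃ a : ∀ l, D l, (∀ l, a l ≠ 0) ∧ SFam a ∈ U :=
  stmt_6_general T c hcT hc U I hI hImax
end

section
/- If (U) = {a ∈ R | S(a) ∈ U} is a maximal ideal of R = ∏_{λ∈Λ} D_λ for every ultrafilter U in B, then for every λ ∈ Λ the set max(D_λ) is proconstructible in spec(D_λ), i.e. for every ultrafilter F on the set max(D_λ), the set X_F = {r ∈ D_λ | V(r) ∈ F} is a maximal ideal of D_λ. -/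
/-!
Common setup: `Λ` is an index set, `D λ` a family of commutative rings,
`R = ∏ λ, D λ` the product ring, and
`B = ∏ λ, P(max (D λ))` the product Boolean algebra of the power sets of the
sets of maximal ideals, realized as the Pi type `∀ l, Set (MaximalSpectrum (D l))`
with its componentwise Boolean algebra structure (meet = componentwise ∩,
join = componentwise ∪, `⊥ = (∅)_λ`, complement componentwise, order = componentwise ⊆).
-/

variable {Λ : Type*} {D : Λ → Type*}

/-!
The ultrafilter `F` on `max(D_l)` pulls back along the `l`-th projection `B → P(max(D_l))` to
the ultrafilter `U = {Y | Y_l ∈ F}` in `B`. Membership of `a` in the maximal ideal `(U)` only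
depends on `a_l`, through `V(a_l) ∈ F`, so `(U)` descends along the surjection `R → D_l` to a
maximal ideal of `D_l`, which is exactly `X_F`.
-/

theorem isBUltrafilter_setOf_apply_mem {ι : Type*} {X : ι → Type*} (i : ι)
    (F : Ultrafilter (X i)) : IsBUltrafilter {Y : ∀ i, Set (X i) | Y i ∈ F} :=
  ⟨⟨⟨⊤, Filter.univ_mem⟩, F.empty_notMem, fun _ hX _ hY => Filter.inter_mem hX hY,
    fun _ hY _ hYZ => Filter.mem_of_superset hY (hYZ i)⟩, fun Y => F.mem_or_compl_mem (Y i)⟩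

theorem Ideal.exists_isMaximal_mem_iff_of_surjective {R S : Type*} [CommRing R] [CommRing S]
    {f : R →+* S} (hf : Function.Surjective f) {I : Ideal R} [I.IsMaximal] {p : S → Prop}
    (hmem : ∀ a, a ∈ I ↔ p (f a)) : ∃ M : Ideal S, M.IsMaximal ∧ ∀ s, s ∈ M ↔ p s := by
  have hker : RingHom.ker f ≤ I := fun a ha => by
    rw [hmem, RingHom.mem_ker.1 ha, ← map_zero f, ← hmem]
    exact I.zero_mem
  refine ⟨I.map f, Ideal.IsMaximal.map_of_surjective_of_ker_le hf hker, fun s => ?_⟩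
  obtain ⟨a, rfl⟩ := hf s
  rw [Ideal.mem_map_iff_of_surjective f hf]
  exact ⟨fun ⟨b, hb, hba⟩ => hba ▸ (hmem b).1 hb, fun ha => ⟨a, (hmem a).2 ha, rfl⟩⟩

theorem stmt_10_general [∀ l, CommRing (D l)]
    (h : ∀ U : Set (∀ l, Set (MaximalSpectrum (D l))), IsBUltrafilter U →
      ∃ I : Ideal (∀ l, D l), (∀ a, a ∈ I ↔ SFam a ∈ U) ∧ I.IsMaximal) :
    ∀ l, ∀ F : Ultrafilter (MaximalSpectrum (D l)),
      ∃ M : Ideal (D l), M.IsMaximal ∧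
        ∀ r : D l, r ∈ M ↔ {P : MaximalSpectrum (D l) | r ∈ P.asIdeal} ∈ F := by
  intro l F
  obtain ⟨I, hI, hImax⟩ := h _ (isBUltrafilter_setOf_apply_mem l F)
  exact Ideal.exists_isMaximal_mem_iff_of_surjective (f := Pi.evalRingHom D l)
    (Function.surjective_eval l) hI

/-- If `(U)` is a maximal ideal of `R` for every ultrafilter `U` in `B`, then for
every `l` the set of maximal ideals of `D l` is proconstructible in the prime
spectrum, i.e. for every ultrafilter `F` on the set of maximal ideals of `D l`,
the set of `r` with `V r ∈ F` is a maximal ideal of `D l`. -/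
theorem stmt_10 [∀ l, CommRing (D l)] [∀ l, Nontrivial (D l)]
    (h : ∀ U : Set (∀ l, Set (MaximalSpectrum (D l))), IsBUltrafilter U →
      ∃ I : Ideal (∀ l, D l), (∀ a, a ∈ I ↔ SFam a ∈ U) ∧ I.IsMaximal) :
    ∀ l, ∀ F : Ultrafilter (MaximalSpectrum (D l)),
      ∃ M : Ideal (D l), M.IsMaximal ∧
        ∀ r : D l, r ∈ M ↔ {P : MaximalSpectrum (D l) | r ∈ P.asIdeal} ∈ F :=
  stmt_10_general h
end

section
/- Let (D_λ)_{λ∈Λ} be a family of integral domains and T a subring of R = ∏_{λ∈Λ} D_λ such that for every subset Z ⊆ Λ there exists x ∈ T with z(x) = Z. Then (0)_F^T = {x ∈ T | z(x) ∈ F} is a minimal prime ideal of T for every ultrafilter F on Λ. Moreover, if F and G are two distinct ultrafilters on Λ, then (0)_F^T ≠ (0)_G^T. -/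
/-!
Common setup: `Λ` is an index set, `D λ` a family of commutative rings,
`R = ∏ λ, D λ` the product ring, and
`B = ∏ λ, P(max (D λ))` the product Boolean algebra of the power sets of the
sets of maximal ideals, realized as the Pi type `∀ l, Set (MaximalSpectrum (D l))`
with its componentwise Boolean algebra structure (meet = componentwise ∩,
join = componentwise ∪, `⊥ = (∅)_λ`, complement componentwise, order = componentwise ⊆).
-/

variable {Λ : Type*} {D : Λ → Type*}

section Aux
variable [∀ l, CommRing (D l)]

private def ufIdeal (T : Subring (∀ l, D l)) (F : Ultrafilter Λ) : Ideal T where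
  carrier := {x : T | ZFam (x : ∀ l, D l) ∈ F}
  add_mem' := by
    intro a b ha hb
    refine Filter.mem_of_superset (Filter.inter_mem ha hb) ?_
    rintro l ⟨h1, h2⟩
    show (a : ∀ l, D l) l + (b : ∀ l, D l) l = 0
    rw [show (a : ∀ l, D l) l = 0 from h1, show (b : ∀ l, D l) l = 0 from h2, add_zero]
  zero_mem' := by
    have : ZFam ((0 : T) : ∀ l, D l) = Set.univ := by ext l; simp [ZFam]
    show ZFam ((0 : T) : ∀ l, D l) ∈ F
    rw [this]; exact Filter.univ_mem
  smul_mem' := by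
    intro c x hx
    show ZFam ((c * x : T) : ∀ l, D l) ∈ F
    refine Filter.mem_of_superset hx ?_
    intro l h1
    show (c : ∀ l, D l) l * (x : ∀ l, D l) l = 0
    rw [show (x : ∀ l, D l) l = 0 from h1, mul_zero]

private lemma mem_ufIdeal {T : Subring (∀ l, D l)} {F : Ultrafilter Λ} {x : T} :
    x ∈ ufIdeal T F ↔ ZFam (x : ∀ l, D l) ∈ F := Iff.rfl

private lemma ufIdeal_prime [∀ l, IsDomain (D l)] (T : Subring (∀ l, D l))
    (F : Ultrafilter Λ) : (ufIdeal T F).IsPrime := by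
  constructor
  · rw [Ideal.ne_top_iff_one]
    intro h
    have h1 : ZFam ((1 : T) : ∀ l, D l) = (∅ : Set Λ) := by
      ext l; simp [ZFam]
    rw [mem_ufIdeal, h1] at h
    exact Ultrafilter.empty_notMem h
  · intro x y hxy
    rw [mem_ufIdeal] at hxy ⊢
    rw [mem_ufIdeal]
    have : ZFam ((x * y : T) : ∀ l, D l) = ZFam (x : ∀ l, D l) ∪ ZFam (y : ∀ l, D l) := by
      ext l; simp only [ZFam, Set.mem_setOf_eq, Set.mem_union]
      show (x : ∀ l, D l) l * (y : ∀ l, D l) l = 0 ↔ _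
      exact mul_eq_zero
    rw [this] at hxy
    exact Ultrafilter.union_mem_iff.mp hxy

end Aux

/-- If the `D l` are integral domains and `T ⊆ R` is a subring such that every subset
of `Λ` is the zero set `z x` of some `x ∈ T`, then the set of `x ∈ T` with `z x ∈ F`
is a minimal prime ideal of `T` for every ultrafilter `F` on `Λ`, and distinct
ultrafilters give distinct ideals. -/
theorem stmt_14 [∀ l, CommRing (D l)] [∀ l, IsDomain (D l)]
    (T : Subring (∀ l, D l)) (hT : ∀ Z : Set Λ, ∃ x ∈ T, ZFam x = Z) :
    (∀ F : Ultrafilter Λ, ∃ I : Ideal T,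
      (∀ x : T, x ∈ I ↔ ZFam (x : ∀ l, D l) ∈ F) ∧ I ∈ minimalPrimes T) ∧
    (∀ F G : Ultrafilter Λ, F ≠ G →
      {x : T | ZFam (x : ∀ l, D l) ∈ F} ≠ {x : T | ZFam (x : ∀ l, D l) ∈ G}) := by
  constructor
  · intro F
    refine ⟨ufIdeal T F, fun x => Iff.rfl, ?_⟩
    constructor
    · exact ⟨ufIdeal_prime T F, bot_le⟩
    · rintro Q ⟨hQp, -⟩ hQle x hx
      rw [mem_ufIdeal] at hx
      obtain ⟨y, hyT, hzy⟩ := hT (ZFam (x : ∀ l, D l))ᶜ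
      have hxy0 : x * (⟨y, hyT⟩ : T) = 0 := by
        apply Subtype.ext
        funext l
        show (x : ∀ l, D l) l * y l = 0
        by_cases hl : l ∈ ZFam (x : ∀ l, D l)
        · rw [show (x : ∀ l, D l) l = 0 from hl, zero_mul]
        · have : y l = 0 := by
            have := hzy ▸ (Set.mem_compl hl)
            exact this
          rw [this, mul_zero]
      have : x * (⟨y, hyT⟩ : T) ∈ Q := by rw [hxy0]; exact Q.zero_mem
      rcases hQp.mem_or_mem this with h | h
      · exact h
      · exfalso
        have hyF : ZFam y ∈ F := hQle h
        rw [hzy] at hyF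
        exact Ultrafilter.compl_mem_iff_notMem.mp hyF hx
  · intro F G hFG h
    apply hFG
    apply Ultrafilter.coe_injective
    apply Filter.ext
    intro Z
    obtain ⟨x, hxT, hzx⟩ := hT Z
    have := Set.ext_iff.mp h (⟨x, hxT⟩ : T)
    simp only [Set.mem_setOf_eq] at this
    rw [show ZFam ((⟨x, hxT⟩ : T) : ∀ l, D l) = Z from hzx] at this
    exact ⟨fun hZ => this.mp hZ, fun hZ => this.mpr hZ⟩
end

section
/- Let (D_λ)_{λ∈Λ} be a family of integral domains, U an ultrafilter in B and F an ultrafilter on Λ. Then the containment (0)_F ⊆ (U) of ideals of R = ∏_{λ∈Λ} D_λ holds if and only if F = F_U. In particular, every prime ideal of R contains a unique minimal prime ideal of R. -/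
/-!
Common setup: `Λ` is an index set, `D λ` a family of commutative rings,
`R = ∏ λ, D λ` the product ring, and
`B = ∏ λ, P(max (D λ))` the product Boolean algebra of the power sets of the
sets of maximal ideals, realized as the Pi type `∀ l, Set (MaximalSpectrum (D l))`
with its componentwise Boolean algebra structure (meet = componentwise ∩,
join = componentwise ∪, `⊥ = (∅)_λ`, complement componentwise, order = componentwise ⊆).
-/

variable {Λ : Type*} {D : Λ → Type*}

/-!
The idempotents `e_A` (indicators of `A ⊆ Λ`) translate between subsets of `Λ` and `R`:
`z(e_A) = Aᶜ`, and `S(e_A)` is empty on `A` and full off `A`. Applied to `e_{Aᶜ}` with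
`A ∈ F`, the containment `(0)_F ⊆ (U)` puts into `U` an element supported exactly on `A`;
applied to `e_A` with `A` the support of some `Y ∈ U` and `A ∉ F`, it would put into `U` an
element disjoint from `Y`. Conversely, if `z(x)` is the support of `Y ∈ U`, then `Y ≤ S(x)`.

For a prime `P`, the sets `A` with `e_A ∉ P` form an ultrafilter `F_P`, and `(0)_{F_P} ⊆ P`
because `x · e_{z(x)} = 0`. Since `Q ⊆ P` forces `F_Q = F_P` and `F_{(0)_G} = G`, the minimal
primes are exactly the ideals `(0)_G`, and `(0)_{F_P}` is the only one below `P`.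
-/

section Indicator

variable [∀ l, CommRing (D l)]

open Classical in
noncomputable def indicatorOne (A : Set Λ) : ∀ l, D l := fun l => if l ∈ A then 1 else 0

@[simp]
lemma indicatorOne_of_mem {A : Set Λ} {l : Λ} (h : l ∈ A) : indicatorOne (D := D) A l = 1 :=
  if_pos h

@[simp]
lemma indicatorOne_of_notMem {A : Set Λ} {l : Λ} (h : l ∉ A) : indicatorOne (D := D) A l = 0 :=
  if_neg h

lemma indicatorOne_univ : indicatorOne (D := D) Set.univ = 1 := by
  ext l; simp

lemma indicatorOne_inter (A B : Set Λ) :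
    indicatorOne (D := D) (A ∩ B) = indicatorOne A * indicatorOne B := by
  ext l
  by_cases hA : l ∈ A <;> by_cases hB : l ∈ B <;> simp [hA, hB]

lemma indicatorOne_add_compl (A : Set Λ) :
    indicatorOne (D := D) A + indicatorOne Aᶜ = 1 := by
  ext l
  by_cases hA : l ∈ A <;> simp [hA]

lemma indicatorOne_mul_compl (A : Set Λ) :
    indicatorOne (D := D) A * indicatorOne Aᶜ = 0 := by
  rw [← indicatorOne_inter, Set.inter_compl_self]
  ext l; simp

lemma mul_indicatorOne_ZFam (x : ∀ l, D l) : x * indicatorOne (ZFam x) = 0 := by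
  ext l
  by_cases h : l ∈ ZFam x
  · simp [show x l = 0 from h]
  · simp [h]

lemma ZFam_indicatorOne [∀ l, Nontrivial (D l)] (A : Set Λ) :
    ZFam (indicatorOne (D := D) A) = Aᶜ := by
  ext l
  by_cases h : l ∈ A <;> simp [ZFam, h]

lemma SFam_indicatorOne_of_mem {A : Set Λ} {l : Λ} (h : l ∈ A) :
    SFam (indicatorOne (D := D) A) l = ∅ := by
  ext M
  simpa [SFam, h] using M.isMaximal.ne_top ∘ (Ideal.eq_top_iff_one _).2

lemma SFam_indicatorOne_of_notMem {A : Set Λ} {l : Λ} (h : l ∉ A) :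
    SFam (indicatorOne (D := D) A) l = Set.univ := by
  ext M
  simp [SFam, h]

lemma SFam_indicatorOne_ne_empty_iff [∀ l, Nontrivial (D l)] (A : Set Λ) (l : Λ) :
    SFam (indicatorOne (D := D) A) l ≠ ∅ ↔ l ∉ A := by
  by_cases h : l ∈ A
  · simp [h, SFam_indicatorOne_of_mem h]
  · simp [h, SFam_indicatorOne_of_notMem h, Set.univ_nonempty.ne_empty]

end Indicator

section ZeroIdeal

variable [∀ l, CommRing (D l)]

def zeroIdealOf (F : Filter Λ) : Ideal (∀ l, D l) where
  carrier := {x | ZFam x ∈ F}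
  zero_mem' := Filter.mem_of_superset Filter.univ_mem fun l _ => rfl
  add_mem' {x y} hx hy := Filter.mem_of_superset (Filter.inter_mem hx hy) fun l ⟨hxl, hyl⟩ => by
    simp_all [ZFam]
  smul_mem' c x hx := Filter.mem_of_superset hx fun l hxl => by
    simp_all [ZFam]

lemma mem_zeroIdealOf {F : Filter Λ} {x : ∀ l, D l} : x ∈ zeroIdealOf F ↔ ZFam x ∈ F :=
  Iff.rfl

lemma ZFam_mul [∀ l, NoZeroDivisors (D l)] (x y : ∀ l, D l) :
    ZFam (x * y) = ZFam x ∪ ZFam y := by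
  ext l
  simp [ZFam]

instance zeroIdealOf_isPrime [∀ l, IsDomain (D l)] (G : Ultrafilter Λ) :
    (zeroIdealOf (D := D) (G : Filter Λ)).IsPrime where
  ne_top' h := by
    have hZ : ZFam (1 : ∀ l, D l) = ∅ := by ext l; simp [ZFam]
    simpa [mem_zeroIdealOf, hZ] using (Ideal.eq_top_iff_one _).1 h
  mem_or_mem' {x y} h := by
    rw [mem_zeroIdealOf, ZFam_mul] at h
    exact Ultrafilter.union_mem_iff.1 h

end ZeroIdeal

section PrimeUltrafilter

variable [∀ l, CommRing (D l)]

noncomputable def primeUltrafilter (P : Ideal (∀ l, D l)) [P.IsPrime] : Ultrafilter Λ :=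
  Ultrafilter.ofComplNotMemIff
    { sets := {A | indicatorOne A ∉ P}
      univ_sets := by
        simpa [indicatorOne_univ] using (Ideal.ne_top_iff_one P).1 ‹P.IsPrime›.ne_top
      sets_of_superset {A B} hA hAB := fun hB => hA <| by
        rw [← Set.inter_eq_left.2 hAB, indicatorOne_inter]
        exact P.mul_mem_left _ hB
      inter_sets {A B} hA hB := by
        simpa [indicatorOne_inter, Ideal.IsPrime.mul_mem_iff_mem_or_mem] using And.intro hA hB }
    fun A => by
      have hprod := indicatorOne_mul_compl (D := D) A ▸ P.zero_mem
      have hsum := (Ideal.ne_top_iff_one P).1 ‹P.IsPrime›.ne_top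
      rw [← indicatorOne_add_compl (D := D) A] at hsum
      simp only [Filter.mem_mk, Set.mem_ofPred_eq, not_not]
      exact ⟨fun hAc hA => hsum (P.add_mem hA hAc),
        fun hA => (‹P.IsPrime›.mem_or_mem hprod).resolve_left hA⟩

variable {P Q : Ideal (∀ l, D l)} [P.IsPrime] [Q.IsPrime]

lemma mem_primeUltrafilter {A : Set Λ} : A ∈ primeUltrafilter P ↔ indicatorOne A ∉ P :=
  Iff.rfl

lemma zeroIdealOf_primeUltrafilter_le : zeroIdealOf (primeUltrafilter P : Filter Λ) ≤ P := by
  intro x hx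
  have hprod := mul_indicatorOne_ZFam x ▸ P.zero_mem
  exact (‹P.IsPrime›.mem_or_mem hprod).resolve_right hx

lemma primeUltrafilter_eq_of_le (h : Q ≤ P) : primeUltrafilter Q = primeUltrafilter P :=
  Ultrafilter.eq_of_le fun _ hA hAQ => mem_primeUltrafilter.1 hA (h hAQ)

lemma primeUltrafilter_zeroIdealOf [∀ l, IsDomain (D l)] (G : Ultrafilter Λ) :
    primeUltrafilter (zeroIdealOf (D := D) (G : Filter Λ)) = G := by
  ext A
  rw [mem_primeUltrafilter, mem_zeroIdealOf, ZFam_indicatorOne, Ultrafilter.mem_coe,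
    Ultrafilter.compl_mem_iff_notMem, not_not]

end PrimeUltrafilter

section MinimalPrimes

variable [∀ l, CommRing (D l)] [∀ l, IsDomain (D l)]

lemma zeroIdealOf_mem_minimalPrimes (G : Ultrafilter Λ) :
    zeroIdealOf (D := D) (G : Filter Λ) ∈ minimalPrimes (∀ l, D l) := by
  rw [minimalPrimes_eq_minimals]
  refine ⟨inferInstance, fun Q hQ hle => ?_⟩
  have : Q.IsPrime := hQ
  calc zeroIdealOf (G : Filter Λ)
      = zeroIdealOf (primeUltrafilter Q : Filter Λ) := by
        rw [primeUltrafilter_eq_of_le hle, primeUltrafilter_zeroIdealOf]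
    _ ≤ Q := zeroIdealOf_primeUltrafilter_le

lemma eq_zeroIdealOf_of_mem_minimalPrimes {Q : Ideal (∀ l, D l)} [Q.IsPrime]
    (hQ : Q ∈ minimalPrimes (∀ l, D l)) : Q = zeroIdealOf (primeUltrafilter Q : Filter Λ) := by
  rw [minimalPrimes_eq_minimals] at hQ
  exact le_antisymm (hQ.2 inferInstance zeroIdealOf_primeUltrafilter_le)
    zeroIdealOf_primeUltrafilter_le

theorem existsUnique_minimalPrimes_le (P : Ideal (∀ l, D l)) [P.IsPrime] :
    ∃! Q : Ideal (∀ l, D l), Q ∈ minimalPrimes (∀ l, D l) ∧ Q ≤ P := by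
  refine ⟨_, ⟨zeroIdealOf_mem_minimalPrimes (primeUltrafilter P),
    zeroIdealOf_primeUltrafilter_le⟩, fun Q ⟨hQ, hQP⟩ => ?_⟩
  have : Q.IsPrime := IsMinimalPrime.isPrime hQ
  rw [eq_zeroIdealOf_of_mem_minimalPrimes hQ, primeUltrafilter_eq_of_le hQP]

end MinimalPrimes

section Containment

variable [∀ l, CommRing (D l)] {U : Set (∀ l, Set (MaximalSpectrum (D l)))}

lemma exists_eq_support_of_subset [∀ l, Nontrivial (D l)] {F : Filter Λ}
    (hsub : {x : ∀ l, D l | ZFam x ∈ F} ⊆ {a | SFam a ∈ U}) {A : Set Λ} (hA : A ∈ F) :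
    ∃ Y ∈ U, A = {l | Y l ≠ ∅} := by
  refine ⟨SFam (indicatorOne Aᶜ), hsub ?_, ?_⟩
  · rwa [Set.mem_ofPred_eq, ZFam_indicatorOne, compl_compl]
  · ext l
    simp [SFam_indicatorOne_ne_empty_iff]

lemma support_mem_of_subset [∀ l, Nontrivial (D l)] (hU : IsBFilter U) {F : Ultrafilter Λ}
    (hsub : {x : ∀ l, D l | ZFam x ∈ F} ⊆ {a | SFam a ∈ U})
    {Y : ∀ l, Set (MaximalSpectrum (D l))} (hY : Y ∈ U) : {l | Y l ≠ ∅} ∈ F := by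
  set A := {l | Y l ≠ ∅}
  by_contra hA
  have hS : SFam (indicatorOne (D := D) A) ∈ U := by
    refine hsub ?_
    rw [Set.mem_ofPred_eq, ZFam_indicatorOne]
    exact Ultrafilter.compl_mem_iff_notMem.2 hA
  have hdisj : SFam (indicatorOne (D := D) A) ⊓ Y = ⊥ := by
    funext l
    by_cases hl : l ∈ A
    · simp [SFam_indicatorOne_of_mem hl]
    · simp [show Y l = ∅ from not_not.1 hl]
  exact hU.2.1 (hdisj ▸ hU.2.2.1 _ hS _ hY)

lemma subset_of_forall_exists_eq_support (hU : IsBFilter U) {F : Filter Λ}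
    (hF : ∀ A ∈ F, ∃ Y ∈ U, A = {l | Y l ≠ ∅}) :
    {x : ∀ l, D l | ZFam x ∈ F} ⊆ {a | SFam a ∈ U} := by
  intro x hx
  obtain ⟨Y, hY, hYx⟩ := hF _ hx
  refine hU.2.2.2 Y hY _ fun l M hM => ?_
  have hxl : l ∈ ZFam x := hYx ▸ (Set.nonempty_of_mem hM).ne_empty
  simp [SFam, show x l = 0 from hxl]

theorem subset_iff_eq_ultrafilter_support [∀ l, Nontrivial (D l)] (hU : IsBFilter U)
    (F : Ultrafilter Λ) :
    {x : ∀ l, D l | ZFam x ∈ F} ⊆ {a | SFam a ∈ U} ↔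
      ∀ A : Set Λ, A ∈ F ↔ ∃ Y ∈ U, A = {l | Y l ≠ ∅} := by
  refine ⟨fun hsub A => ⟨exists_eq_support_of_subset hsub, ?_⟩,
    fun hF => subset_of_forall_exists_eq_support hU fun A => (hF A).1⟩
  rintro ⟨Y, hY, rfl⟩
  exact support_mem_of_subset hU hsub hY

end Containment

/-- For integral domains `D l`, an ultrafilter `U` in `B` and an ultrafilter `F` on
`Λ`: the containment `(0)_F ⊆ (U)` holds if and only if `F = F_U`, where `F_U`
consists of the sets of indices where an element of `U` has a nonempty component.
In particular, every prime ideal of `R` contains a unique minimal prime ideal. -/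
theorem stmt_16 [∀ l, CommRing (D l)] [∀ l, IsDomain (D l)]
    (U : Set (∀ l, Set (MaximalSpectrum (D l)))) (hU : IsBUltrafilter U)
    (F : Ultrafilter Λ) :
    ({x : ∀ l, D l | ZFam x ∈ F} ⊆ {a : ∀ l, D l | SFam a ∈ U} ↔
      (∀ A : Set Λ, A ∈ F ↔ ∃ Y ∈ U, A = {l | Y l ≠ ∅})) ∧
    (∀ P : Ideal (∀ l, D l), P.IsPrime →
      ∃! Q : Ideal (∀ l, D l), Q ∈ minimalPrimes (∀ l, D l) ∧ Q ≤ P) :=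
  ⟨subset_iff_eq_ultrafilter_support hU.1 F, fun P _ => existsUnique_minimalPrimes_le P⟩
end

section
/- Let (D_λ)_{λ∈Λ} be a family of Prüfer domains, R = ∏_{λ∈Λ} D_λ, U an ultrafilter in B, F = F_U the induced ultrafilter on Λ, and x ∈ (U). Then the set (U)^{g(x)} = {r ∈ R | ∃ Y ∈ U ∃ n ∈ ℕ ∀ λ ∈ Λ ∀ P ∈ Y_λ, x_λ divides r_λ^n in the localization of D_λ at P} is a prime ideal of R containing x and satisfying (0)_F ⊆ (U)^{g(x)} ⊆ (U); moreover it is the smallest such prime ideal, i.e. every prime ideal 𝔓 of R with x ∈ 𝔓 and (0)_F ⊆ 𝔓 ⊆ (U) contains (U)^{g(x)}. -/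
/-!
Common setup: `Λ` is an index set, `D λ` a family of commutative rings,
`R = ∏ λ, D λ` the product ring, and
`B = ∏ λ, P(max (D λ))` the product Boolean algebra of the power sets of the
sets of maximal ideals, realized as the Pi type `∀ l, Set (MaximalSpectrum (D l))`
with its componentwise Boolean algebra structure (meet = componentwise ∩,
join = componentwise ∪, `⊥ = (∅)_λ`, complement componentwise, order = componentwise ⊆).
-/

variable {Λ : Type*} {D : Λ → Type*}

/-- Divisibility in the localization of a ring at a maximal ideal `P`:
`x` divides `y` in `A_P`. -/
def LocDvd {A : Type*} [CommRing A] (P : MaximalSpectrum A) (x y : A) : Prop :=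
  (algebraMap A (Localization.AtPrime P.asIdeal) x) ∣
    algebraMap A (Localization.AtPrime P.asIdeal) y

/-- A Prüfer domain: an integral domain whose localization at every maximal ideal
is a valuation ring. -/
def IsPrueferDomain (A : Type*) [CommRing A] [IsDomain A] : Prop :=
  ∀ P : MaximalSpectrum A, ValuationRing (Localization.AtPrime P.asIdeal)

/-- Membership in `(U)^{g(x)}`: `r ∈ (U)^{g(x)}` iff there are `Y ∈ U` and `n ∈ ℕ`
such that for all `λ` and all `P ∈ Y_λ`, `x_λ` divides `r_λ ^ n` in the localization
of `D λ` at `P`. -/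
def UgMem [∀ l, CommRing (D l)] (U : Set (∀ l, Set (MaximalSpectrum (D l))))
    (x r : ∀ l, D l) : Prop :=
  ∃ Y ∈ U, ∃ n : ℕ, ∀ l, ∀ P ∈ Y l, LocDvd P (x l) (r l ^ n)

/-- The minimal prime `(0)_{F_U}` as a set: those `r` whose zero set `z r` belongs to
the induced ultrafilter `F_U = { {λ | Y_λ ≠ ∅} : Y ∈ U }` on `Λ`. -/
def ZeroFU [∀ l, CommRing (D l)] (U : Set (∀ l, Set (MaximalSpectrum (D l)))) :
    Set (∀ l, D l) :=
  {r | ∃ Y ∈ U, ZFam r = {l | Y l ≠ ∅}}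

/-!
The membership condition of `(U)^{g(x)}` is local at the pairs `(λ, P)` and `U` is closed under
meets, so it defines an ideal; it is prime because each `(D_λ)_P` is a valuation ring: if
`x ∣ (ab)^n` there, then `x ∣ a^{2n}` or `x ∣ b^{2n}`, and the ultrafilter chooses one of the two
sets of pairs where this holds.

For minimality, let `x ∣ r^n` locally on `Y ∈ U`. In a Prüfer domain
`(x_λ) : (r_λ^n) + (r_λ^n) : (x_λ) = D_λ`, so `1 = s + t` with `x ∣ s r^n` and `t x = r^n q`.
Then `s r^n ∈ 𝔓`, and if `s ∈ 𝔓`, then `t` is a local unit at every `P ∈ Y_λ ∩ V(s_λ)`, hence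
so is `q`; thus `q ∉ 𝔓 ⊆ (U)` and `r^n ∈ 𝔓`.
-/

open Ideal

section Divisibility

variable {A : Type*} [CommRing A]

lemma PreValuationRing.dvd_sq_or_dvd_sq_of_dvd_mul {R : Type*} [CommMonoid R]
    [PreValuationRing R] {x a b : R} (h : x ∣ a * b) : x ∣ a ^ 2 ∨ x ∣ b ^ 2 := by
  rcases ValuationRing.dvd_total a b with hab | hba
  · exact Or.inr (h.trans (by rw [sq]; exact mul_dvd_mul_right hab b))
  · exact Or.inl (h.trans (by rw [sq]; exact mul_dvd_mul_left a hba))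

lemma exists_eq_mul_and_eq_one_of_dvd {M : Type*} [MonoidWithZero M] {a b : M} (h : a ∣ b) :
    ∃ c, b = a * c ∧ (a = 0 → c = 1) := by
  obtain ⟨c, rfl⟩ := h
  by_cases ha : a = 0
  · exact ⟨1, by simp [ha], fun _ => rfl⟩
  · exact ⟨c, rfl, fun h => absurd h ha⟩

namespace LocDvd

variable {P : MaximalSpectrum A} {x y : A}

lemma refl (P : MaximalSpectrum A) (x : A) : LocDvd P x x := dvd_rfl

lemma zero_right (P : MaximalSpectrum A) (x : A) : LocDvd P x 0 := by
  simp [LocDvd]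

lemma mul_left (h : LocDvd P x y) (z : A) : LocDvd P x (z * y) := by
  unfold LocDvd at *
  rw [map_mul]
  exact h.mul_left _

lemma add_pow {a b : A} {m n : ℕ} (ha : LocDvd P x (a ^ m)) (hb : LocDvd P x (b ^ n)) :
    LocDvd P x ((a + b) ^ (m + n - 1)) := by
  unfold LocDvd at *
  rw [map_pow, ← mem_span_singleton] at ha hb
  rw [map_pow, map_add, ← mem_span_singleton]
  exact add_pow_add_pred_mem_of_pow_mem _ ha hb

lemma mem_of_mem (h : LocDvd P x y) (hx : x ∈ P.asIdeal) : y ∈ P.asIdeal := by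
  by_contra hy
  have hu := (IsLocalization.AtPrime.isUnit_to_map_iff
    (Localization.AtPrime P.asIdeal) P.asIdeal y).mpr hy
  exact (IsLocalization.AtPrime.isUnit_to_map_iff _ P.asIdeal x).mp (isUnit_of_dvd_unit h hu) hx

lemma mul_pow_or [PreValuationRing (Localization.AtPrime P.asIdeal)] {a b : A} {n : ℕ}
    (h : LocDvd P x ((a * b) ^ n)) : LocDvd P x (a ^ (n * 2)) ∨ LocDvd P x (b ^ (n * 2)) := by
  unfold LocDvd at *
  simp only [mul_pow, map_mul, map_pow, pow_mul] at h ⊢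
  exact PreValuationRing.dvd_sq_or_dvd_sq_of_dvd_mul h

lemma exists_notMem_dvd_mul (h : LocDvd P x y) : ∃ u ∉ P.asIdeal, x ∣ u * y := by
  obtain ⟨c, hc⟩ := h
  obtain ⟨⟨num, den⟩, hden⟩ := IsLocalization.surj P.asIdeal.primeCompl c
  have hmap : algebraMap A (Localization.AtPrime P.asIdeal) (den * y) =
      algebraMap A (Localization.AtPrime P.asIdeal) (x * num) := by
    rw [map_mul, map_mul, hc, ← hden]
    ring
  obtain ⟨w, hw⟩ := IsLocalization.exists_of_eq (M := P.asIdeal.primeCompl) hmap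
  exact ⟨w * den, P.asIdeal.primeCompl.mul_mem w.2 den.2, w * num, by linear_combination hw⟩

lemma notMem_of_mul_eq [IsDomain A] {t q : A} (h : LocDvd P x y) (htq : t * x = y * q)
    (hq : y = 0 → q = 1) (ht : t ∉ P.asIdeal) : q ∉ P.asIdeal := by
  set f := algebraMap A (Localization.AtPrime P.asIdeal)
  have hinj : Function.Injective f :=
    IsLocalization.injective _ P.asIdeal.primeCompl_le_nonZeroDivisors
  obtain ⟨c, hc⟩ := h
  by_cases hx : x = 0
  · have hy : y = 0 := hinj (by rw [hc, hx, map_zero, zero_mul])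
    rw [hq hy]
    exact (ne_top_iff_one _).mp P.isMaximal.ne_top
  · have hfx : f x ≠ 0 := (map_ne_zero_iff f hinj).mpr hx
    have hft : f t = c * f q :=
      mul_right_cancel₀ hfx (by rw [← map_mul, htq, map_mul, hc]; ring)
    have hu : IsUnit (f t) := (IsLocalization.AtPrime.isUnit_to_map_iff _ P.asIdeal t).mpr ht
    rw [hft] at hu
    exact (IsLocalization.AtPrime.isUnit_to_map_iff _ P.asIdeal q).mp
      (isUnit_of_mul_isUnit_right hu)

end LocDvd

theorem IsPrueferDomain.exists_add_eq_one_dvd_mul [IsDomain A] (hA : IsPrueferDomain A)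
    (a b : A) : ∃ s t, s + t = 1 ∧ a ∣ s * b ∧ b ∣ t * a := by
  suffices h : (span {a}).colon (span {b}) ⊔ (span {b}).colon (span {a}) = ⊤ by
    obtain ⟨s, hs, t, ht, hst⟩ := Submodule.mem_sup.mp (h ▸ Submodule.mem_top : (1 : A) ∈ _)
    exact ⟨s, t, hst, mem_span_singleton.mp (mem_colon_span_singleton.mp hs),
      mem_span_singleton.mp (mem_colon_span_singleton.mp ht)⟩
  by_contra hne
  obtain ⟨M, hM, hle⟩ := exists_le_maximal _ hne
  have := hA ⟨M, hM⟩
  rcases ValuationRing.dvd_total (algebraMap A (Localization.AtPrime M) a)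
    (algebraMap A _ b) with hab | hba
  · obtain ⟨u, hu, hdvd⟩ := LocDvd.exists_notMem_dvd_mul (P := ⟨M, hM⟩) hab
    exact hu (hle (mem_sup_left (mem_colon_span_singleton.mpr (mem_span_singleton.mpr hdvd))))
  · obtain ⟨u, hu, hdvd⟩ := LocDvd.exists_notMem_dvd_mul (P := ⟨M, hM⟩) hba
    exact hu (hle (mem_sup_right (mem_colon_span_singleton.mpr (mem_span_singleton.mpr hdvd))))

end Divisibility

namespace IsBFilter

variable {B : Type*} [BooleanAlgebra B] {U : Set B} {X Y : B}

lemma inf_mem_s17 (hU : IsBFilter U) (hX : X ∈ U) (hY : Y ∈ U) : X ⊓ Y ∈ U := hU.2.2.1 X hX Y hY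

lemma mono (hU : IsBFilter U) (hX : X ∈ U) (h : X ≤ Y) : Y ∈ U := hU.2.2.2 X hX Y h

lemma exists_mem {ι : Type*} {α : ι → Type*} {U : Set (∀ i, Set (α i))} (hU : IsBFilter U)
    {Y : ∀ i, Set (α i)} (hY : Y ∈ U) : ∃ i, ∃ a, a ∈ Y i := by
  by_contra! h
  have hbot : Y = ⊥ := funext fun i => Set.eq_empty_iff_forall_notMem.mpr (h i)
  exact hU.2.1 (hbot ▸ hY)

end IsBFilter

lemma IsBUltrafilter.mem_or_mem_of_le_sup {B : Type*} [BooleanAlgebra B] {U : Set B} {X Y Z : B}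
    (hU : IsBUltrafilter U) (hY : Y ∈ U) (h : Y ≤ X ⊔ Z) : X ∈ U ∨ Z ∈ U :=
  (hU.2 X).imp id fun hX => hU.1.mono (hU.1.inf_mem_s17 hY hX) (by rwa [← sdiff_eq, sdiff_le_iff])

section UgIdeal

variable [∀ l, CommRing (D l)] {U : Set (∀ l, Set (MaximalSpectrum (D l)))} {x : ∀ l, D l}

def ugIdeal (hU : IsBFilter U) (x : ∀ l, D l) : Ideal (∀ l, D l) where
  carrier := {r | UgMem U x r}
  zero_mem' :=
    let ⟨Y, hY⟩ := hU.1
    ⟨Y, hY, 1, fun l P _ => by simpa using LocDvd.zero_right P (x l)⟩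
  add_mem' := by
    rintro a b ⟨Y₁, hY₁, m, ha⟩ ⟨Y₂, hY₂, n, hb⟩
    exact ⟨Y₁ ⊓ Y₂, hU.inf_mem_s17 hY₁ hY₂, m + n - 1,
      fun l P hP => (ha l P hP.1).add_pow (hb l P hP.2)⟩
  smul_mem' := by
    rintro c r ⟨Y, hY, n, h⟩
    exact ⟨Y, hY, n, fun l P hP => by simpa [mul_pow] using (h l P hP).mul_left (c l ^ n)⟩

section Filter

variable (hU : IsBFilter U)

lemma mem_ugIdeal {r : ∀ l, D l} : r ∈ ugIdeal hU x ↔ UgMem U x r := Iff.rfl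

lemma self_mem_ugIdeal : x ∈ ugIdeal hU x :=
  let ⟨Y, hY⟩ := hU.1
  ⟨Y, hY, 1, fun l P _ => by simpa using LocDvd.refl P (x l)⟩

lemma zeroFU_subset_ugIdeal : ZeroFU U ⊆ ugIdeal hU x := by
  rintro r ⟨Y, hY, hzr⟩
  refine ⟨Y, hY, 1, fun l P hP => ?_⟩
  have hr : r l = 0 := show l ∈ ZFam r from hzr ▸ Set.nonempty_iff_ne_empty.mp ⟨P, hP⟩
  simpa [hr] using LocDvd.zero_right P (x l)

lemma ugIdeal_subset (hx : SFam x ∈ U) :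
    (ugIdeal hU x : Set (∀ l, D l)) ⊆ {a | SFam a ∈ U} := by
  rintro r ⟨Y, hY, n, h⟩
  exact hU.mono (hU.inf_mem_s17 hY hx) fun l P hP =>
    P.isMaximal.isPrime.mem_of_pow_mem n ((h l P hP.1).mem_of_mem hP.2)

lemma ugIdeal_ne_top (hx : SFam x ∈ U) : ugIdeal hU x ≠ ⊤ := by
  intro htop
  obtain ⟨l, P, hP⟩ := hU.exists_mem (ugIdeal_subset hU hx ((eq_top_iff_one _).mp htop))
  exact (ne_top_iff_one _).mp P.isMaximal.ne_top hP

lemma ugIdeal_le_of_isPrime [∀ l, IsDomain (D l)] (hpruefer : ∀ l, IsPrueferDomain (D l))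
    {𝔓 : Ideal (∀ l, D l)} (h𝔓 : 𝔓.IsPrime) (hx𝔓 : x ∈ 𝔓)
    (h𝔓U : (𝔓 : Set (∀ l, D l)) ⊆ {a | SFam a ∈ U}) : ugIdeal hU x ≤ 𝔓 := by
  rintro r ⟨Y, hY, n, h⟩
  refine h𝔓.mem_of_pow_mem n ?_
  choose s t hst hs ht using fun l => (hpruefer l).exists_add_eq_one_dvd_mul (x l) (r l ^ n)
  have hsr : s * r ^ n ∈ 𝔓 := 𝔓.mem_of_dvd (pi_dvd_iff.mpr hs) hx𝔓
  refine (h𝔓.mem_or_mem hsr).elim (fun hs𝔓 => ?_) id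
  -- `q_λ = 1` wherever `r_λ ^ n = 0`, so that `q` is a local unit also where `x_λ = 0`
  choose q hq hq1 using fun l => exists_eq_mul_and_eq_one_of_dvd (ht l)
  have hrq : r ^ n * q ∈ 𝔓 := by
    rw [show r ^ n * q = t * x from funext fun l => (hq l).symm]
    exact 𝔓.mul_mem_left t hx𝔓
  refine (h𝔓.mem_or_mem hrq).resolve_right fun hq𝔓 => ?_
  obtain ⟨l, P, ⟨⟨hPY, -⟩, hPs⟩, hPq⟩ := hU.exists_mem
    (hU.inf_mem_s17 (hU.inf_mem_s17 (hU.inf_mem_s17 hY (h𝔓U hx𝔓)) (h𝔓U hs𝔓)) (h𝔓U hq𝔓))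
  have htP : t l ∉ P.asIdeal := fun htP =>
    (ne_top_iff_one _).mp P.isMaximal.ne_top (hst l ▸ add_mem hPs htP)
  exact (h l P hPY).notMem_of_mul_eq (hq l) (hq1 l) htP hPq

end Filter

lemma ugIdeal_isPrime [∀ l, IsDomain (D l)] (hpruefer : ∀ l, IsPrueferDomain (D l))
    (hU : IsBUltrafilter U) (hx : SFam x ∈ U) : (ugIdeal hU.1 x).IsPrime := by
  refine ⟨ugIdeal_ne_top hU.1 hx, ?_⟩
  rintro a b ⟨Y, hY, n, h⟩
  have hcover : Y ≤ (fun l => {P | LocDvd P (x l) (a l ^ (n * 2))}) ⊔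
      (fun l => {P | LocDvd P (x l) (b l ^ (n * 2))}) := fun l P hP => by
    have := hpruefer l P
    exact (h l P hP : LocDvd P (x l) ((a l * b l) ^ n)).mul_pow_or
  exact (hU.mem_or_mem_of_le_sup hY hcover).imp (fun hA => ⟨_, hA, n * 2, fun _ _ hP => hP⟩)
    (fun hB => ⟨_, hB, n * 2, fun _ _ hP => hP⟩)

end UgIdeal

/-- For a family of Prüfer domains, an ultrafilter `U` in `B` and `x ∈ (U)`, the set
`(U)^{g(x)}` is a prime ideal of `R` containing `x`, with
`(0)_{F_U} ⊆ (U)^{g(x)} ⊆ (U)`; moreover it is the smallest prime ideal `𝔓` of `R`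
with `x ∈ 𝔓` and `(0)_{F_U} ⊆ 𝔓 ⊆ (U)`. -/
theorem stmt_17 [∀ l, CommRing (D l)] [∀ l, IsDomain (D l)]
    (hpruefer : ∀ l, IsPrueferDomain (D l))
    (U : Set (∀ l, Set (MaximalSpectrum (D l)))) (hU : IsBUltrafilter U)
    (x : ∀ l, D l) (hx : SFam x ∈ U) :
    ∃ I : Ideal (∀ l, D l),
      (∀ r, r ∈ I ↔ UgMem U x r) ∧ I.IsPrime ∧ x ∈ I ∧
      ZeroFU U ⊆ (I : Set (∀ l, D l)) ∧
      (I : Set (∀ l, D l)) ⊆ {a | SFam a ∈ U} ∧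
      ∀ 𝔓 : Ideal (∀ l, D l), 𝔓.IsPrime → x ∈ 𝔓 →
        ZeroFU U ⊆ (𝔓 : Set (∀ l, D l)) →
        (𝔓 : Set (∀ l, D l)) ⊆ {a | SFam a ∈ U} → I ≤ 𝔓 :=
  ⟨ugIdeal hU.1 x, fun _ => mem_ugIdeal hU.1, ugIdeal_isPrime hpruefer hU hx,
    self_mem_ugIdeal hU.1, zeroFU_subset_ugIdeal hU.1, ugIdeal_subset hU.1 hx,
    fun _ h𝔓 hx𝔓 _ h𝔓U => ugIdeal_le_of_isPrime hU.1 hpruefer h𝔓 hx𝔓 h𝔓U⟩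
end
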